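/- arXiv:1302.2315 — 3 statements merged into one kernel-verified Lean document; each statement's English description precedes it below -/
import Mathlib

section
/- If f ∈ PW_π (the Paley–Wiener space of L² functions band-limited to [−π,π]) then f(t) = Σ_{n∈ℤ} f(n)·sinc(t−n), with convergence in L²(ℝ) and uniformly on ℝ. -/
noncomputable section
open MeasureTheory Complex Filter Topology

/-- a(θ) = cot(θ)/2 -/
def aP (θ : ℝ) : ℝ := (Real.cos θ / Real.sin θ) / 2
/-- b(θ) = csc θ -/
def bP (θ : ℝ) : ℝ := 1 / Real.sin θ
/-- Δ = 2π/|b| -/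
def ΔP (θ : ℝ) : ℝ := 2 * Real.pi / |bP θ|
/-- c(θ) = √((1 − i cot θ)/(2π)) -/
def cP (θ : ℝ) : ℂ := ((1 - Complex.I * (Real.cos θ / Real.sin θ)) / (2 * Real.pi)) ^ ((1 : ℂ)/2)
/-- chirp λ_θ(t) = e^{ia t²} -/
def lamP (θ : ℝ) (t : ℝ) : ℂ := Complex.exp (Complex.I * (aP θ) * t ^ 2)
/-- FrFT kernel K_θ(t,ξ) -/
def KP (θ : ℝ) (t ξ : ℝ) : ℂ :=
  cP θ * Complex.exp (Complex.I * (aP θ) * (t ^ 2 + ξ ^ 2) - Complex.I * (bP θ) * t * ξ)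
/-- fractional Fourier transform -/
def frft (θ : ℝ) (f : ℝ → ℂ) (ξ : ℝ) : ℂ := ∫ t : ℝ, f t * KP θ t ξ
/-- ordinary Fourier transform, 𝓕[f](ξ) = (1/√(2π)) ∫ f(t) e^{-itξ} dt -/
def ft (f : ℝ → ℂ) (ξ : ℝ) : ℂ :=
  (1 / Real.sqrt (2 * Real.pi) : ℝ) * ∫ t : ℝ, f t * Complex.exp (-Complex.I * t * ξ)
/-- normalized sinc -/
def nsinc (t : ℝ) : ℝ := if t = 0 then 1 else Real.sin (Real.pi * t) / (Real.pi * t)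
/-- fractional Zak transform -/
def zakP (θ : ℝ) (φ : ℝ → ℂ) (t ξ : ℝ) : ℂ :=
  ∑' n : ℤ, lamP θ (t - n) * φ (t - n) * lamP θ n * (starRingEnd ℂ) (KP θ n ξ)

/-!
Write `g(t) = ∫_{-π}^{π} H(ξ) e^{itξ} dξ` with `H ∈ L²(-π, π)`. The samples `g(n)` are `2π`
times the `(-n)`-th Fourier coefficients of `H` on `(-π, π]`, and the transform of `e^{-inξ}` is
`2π sinc(t - n)`; so the Shannon partial sum `∑_{n ∈ s} g(n) sinc(t - n)` is the transform of the
Fourier partial sum `P_s H`, and the sampling error is the transform of `H - P_s H`.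

Parseval's identity applied to `G(ξ) e^{itξ}` gives `∑_m |γ(t + m)|² = 2π ‖G‖²` for the transform
`γ` of any `G ∈ L²(-π, π)`. A single term of this sum bounds `|γ(t)|²`, and integrating it over
`t ∈ (0, 1]` gives `‖γ‖²_{L²(ℝ)} = 2π ‖G‖²`. As `‖H - P_s H‖ → 0`, the sampling error tends to `0`
both uniformly and in `L²(ℝ)`.
-/

open Set
open scoped Real ENNReal

lemma MeasureTheory.MemLp.intervalIntegrable {E : Type*} [NormedAddCommGroup E] {f : ℝ → E}
    {a b : ℝ} {p : ℝ≥0∞} (hp : 1 ≤ p) (hab : a ≤ b)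
    (hf : MemLp f p (volume.restrict (Ioc a b))) : IntervalIntegrable f volume a b :=
  (intervalIntegrable_iff_integrableOn_Ioc_of_le hab).mpr (hf.integrable hp)

lemma lintegral_eq_setLIntegral_tsum_add_intCast {g : ℝ → ℝ≥0∞} (hg : Measurable g) :
    ∫⁻ x, g x = ∫⁻ x in Ioc 0 1, ∑' n : ℤ, g (x + n) := by
  rw [lintegral_tsum (f := fun (n : ℤ) x => g (x + n))
      fun n => (hg.comp (measurable_add_const (n : ℝ))).aemeasurable,
    ← setLIntegral_univ, ← iUnion_Ioc_intCast,
    lintegral_iUnion (fun _ => measurableSet_Ioc) (pairwise_disjoint_Ioc_intCast ℝ)]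
  refine tsum_congr fun n => ?_
  rw [← (measurePreserving_add_right volume (n : ℝ)).setLIntegral_comp_preimage_emb
    (measurableEmbedding_addRight _), preimage_add_const_Ioc, sub_self]
  simp

lemma norm_exp_I_mul_mul (a b : ℝ) : ‖exp (I * a * b)‖ = 1 := by
  rw [mul_assoc, ← ofReal_mul, norm_exp_I_mul_ofReal]

lemma nsinc_intCast (j : ℤ) : nsinc j = if j = 0 then 1 else 0 := by
  split_ifs with h
  · simp [h, nsinc]
  · rw [nsinc, if_neg (by exact_mod_cast h), mul_comm, Real.sin_int_mul_pi, zero_div]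

lemma integral_exp_I_mul (x : ℝ) : ∫ ξ in -π..π, exp (I * x * ξ) = 2 * π * nsinc x := by
  rcases eq_or_ne x 0 with rfl | hx
  · simp [nsinc]; ring
  rw [integral_exp_mul_complex (mul_ne_zero I_ne_zero (ofReal_ne_zero.mpr hx)), nsinc, if_neg hx]
  push_cast
  rw [show I * x * π = (x * π) * I by ring, show I * x * -π = -(x * π) * I by ring,
    exp_mul_I, exp_mul_I, cos_neg, sin_neg]
  field_simp
  ring

def bandIntegral (H : ℝ → ℂ) (t : ℝ) : ℂ := ∫ ξ in -π..π, H ξ * exp (I * t * ξ)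

def fourierPartialSum (H : ℝ → ℂ) (s : Finset ℤ) (ξ : ℝ) : ℂ :=
  ∑ n ∈ s, (2 * π : ℂ)⁻¹ * bandIntegral H n * exp (-(I * n * ξ))

section BandIntegral

variable {H : ℝ → ℂ}

lemma bandIntegral_mul_exp (H : ℝ → ℂ) (s t : ℝ) :
    bandIntegral (fun ξ => H ξ * exp (I * s * ξ)) t = bandIntegral H (s + t) := by
  unfold bandIntegral
  congr 1 with ξ
  rw [mul_assoc, ← exp_add]
  push_cast
  ring_nf

lemma bandIntegral_sum_exp_neg (a : ℤ → ℂ) (s : Finset ℤ) (t : ℝ) :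
    bandIntegral (fun ξ => ∑ n ∈ s, a n * exp (-(I * n * ξ))) t
      = ∑ n ∈ s, a n * (2 * π * nsinc (t - n)) := by
  have hexp (n : ℤ) (ξ : ℝ) : a n * exp (-(I * n * ξ)) * exp (I * t * ξ)
      = a n * exp (I * (t - n : ℝ) * ξ) := by
    rw [mul_assoc, ← exp_add]; push_cast; ring_nf
  simp only [bandIntegral, Finset.sum_mul, hexp]
  rw [intervalIntegral.integral_finsetSum
    fun n _ => (by fun_prop : Continuous _).intervalIntegrable _ _]
  simp only [intervalIntegral.integral_const_mul, integral_exp_I_mul]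

lemma continuous_bandIntegral (hH : IntervalIntegrable H volume (-π) π) :
    Continuous (bandIntegral H) := by
  refine intervalIntegral.continuous_of_dominated_interval (bound := fun ξ => ‖H ξ‖)
    (fun t => ?_) (fun t => ae_of_all _ fun ξ _ => ?_) hH.norm (ae_of_all _ fun ξ _ => by fun_prop)
  · exact hH.def'.aestronglyMeasurable.mul (by fun_prop : Continuous _).aestronglyMeasurable
  · rw [norm_mul, norm_exp_I_mul_mul, mul_one]

lemma fourierCoeffOn_eq_bandIntegral (H : ℝ → ℂ) (m : ℤ) :
    fourierCoeffOn (neg_lt_self Real.pi_pos) H m = (2 * π)⁻¹ * bandIntegral H (-m) := by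
  rw [fourierCoeffOn_eq_integral, bandIntegral, real_smul, show π - -π = 2 * π by ring]
  push_cast
  congr 1
  · simp
  refine intervalIntegral.integral_congr fun ξ _ => ?_
  rw [fourier_coe_apply, smul_eq_mul, mul_comm]
  congr 2
  field_simp
  push_cast
  ring

theorem hasSum_sq_norm_bandIntegral_intCast (hH : MemLp H 2 (volume.restrict (Ioc (-π) π))) :
    HasSum (fun m : ℤ => ‖bandIntegral H m‖ ^ 2) (2 * π * ∫ ξ in -π..π, ‖H ξ‖ ^ 2) := by
  have h := (hasSum_sq_fourierCoeffOn (neg_lt_self Real.pi_pos) hH).mul_left ((2 * π) ^ 2)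
  have hterm (m : ℤ) : (2 * π) ^ 2 * ‖fourierCoeffOn (neg_lt_self Real.pi_pos) H m‖ ^ 2
      = ‖bandIntegral H ↑(-m)‖ ^ 2 := by
    rw [fourierCoeffOn_eq_bandIntegral, norm_mul, Int.cast_neg, ← mul_pow, ← mul_assoc]
    simp only [Complex.norm_real, norm_inv, Real.norm_of_nonneg Real.two_pi_pos.le,
      mul_inv_cancel₀ Real.two_pi_pos.ne', one_mul]
  rw [funext hterm, smul_eq_mul, show π - -π = 2 * π by ring, ← mul_assoc, sq,
    mul_assoc _ _ (2 * π)⁻¹, mul_inv_cancel₀ (by positivity), mul_one] at h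
  exact (Equiv.neg ℤ).hasSum_iff.mp h

theorem hasSum_sq_norm_bandIntegral_add_intCast
    (hH : MemLp H 2 (volume.restrict (Ioc (-π) π))) (s : ℝ) :
    HasSum (fun m : ℤ => ‖bandIntegral H (s + m)‖ ^ 2) (2 * π * ∫ ξ in -π..π, ‖H ξ‖ ^ 2) := by
  have hnorm (ξ : ℝ) : ‖H ξ * exp (I * s * ξ)‖ = ‖H ξ‖ := by
    rw [norm_mul, norm_exp_I_mul_mul, mul_one]
  have hG : MemLp (fun ξ => H ξ * exp (I * s * ξ)) 2 (volume.restrict (Ioc (-π) π)) :=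
    hH.congr_norm (hH.aestronglyMeasurable.mul (by fun_prop : Continuous _).aestronglyMeasurable)
      (ae_of_all _ fun ξ => (hnorm ξ).symm)
  simpa only [bandIntegral_mul_exp, hnorm] using hasSum_sq_norm_bandIntegral_intCast hG

lemma sq_norm_bandIntegral_le (hH : MemLp H 2 (volume.restrict (Ioc (-π) π))) (t : ℝ) :
    ‖bandIntegral H t‖ ^ 2 ≤ 2 * π * ∫ ξ in -π..π, ‖H ξ‖ ^ 2 := by
  simpa using le_hasSum (hasSum_sq_norm_bandIntegral_add_intCast hH t) 0 fun _ _ => by positivity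

theorem lintegral_enorm_bandIntegral_sq (hH : MemLp H 2 (volume.restrict (Ioc (-π) π))) :
    ∫⁻ t, ‖bandIntegral H t‖ₑ ^ 2 = ENNReal.ofReal (2 * π * ∫ ξ in -π..π, ‖H ξ‖ ^ 2) := by
  have hcont := continuous_bandIntegral
    (hH.intervalIntegrable one_le_two (neg_le_self Real.pi_pos.le))
  rw [lintegral_eq_setLIntegral_tsum_add_intCast (hcont.measurable.enorm.pow_const 2)]
  have hsum (s : ℝ) : ∑' n : ℤ, ‖bandIntegral H (s + n)‖ₑ ^ 2
      = ENNReal.ofReal (2 * π * ∫ ξ in -π..π, ‖H ξ‖ ^ 2) := by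
    have h := hasSum_sq_norm_bandIntegral_add_intCast hH s
    rw [← h.tsum_eq, ENNReal.ofReal_tsum_of_nonneg (fun _ => by positivity) h.summable]
    simp_rw [ENNReal.ofReal_pow (norm_nonneg _), ofReal_norm]
  simp [hsum]

lemma memLp_fourierPartialSum (H : ℝ → ℂ) (s : Finset ℤ) (p : ℝ≥0∞) (μ : Measure ℝ)
    [IsFiniteMeasure μ] : MemLp (fourierPartialSum H s) p μ := by
  refine MemLp.of_bound (by unfold fourierPartialSum; fun_prop : Continuous _).aestronglyMeasurable
    (∑ n ∈ s, ‖(2 * π : ℂ)⁻¹ * bandIntegral H n‖) (ae_of_all _ fun ξ => ?_)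
  refine (norm_sum_le _ _).trans (Finset.sum_le_sum fun n _ => ?_)
  simp [norm_exp]

lemma bandIntegral_sub_fourierPartialSum (hH : IntervalIntegrable H volume (-π) π)
    (s : Finset ℤ) (t : ℝ) :
    bandIntegral (H - fourierPartialSum H s) t
      = bandIntegral H t - ∑ n ∈ s, bandIntegral H n * nsinc (t - n) := by
  have hP : bandIntegral (fourierPartialSum H s) t
      = ∑ n ∈ s, bandIntegral H n * nsinc (t - n) := by
    unfold fourierPartialSum
    rw [bandIntegral_sum_exp_neg]
    refine Finset.sum_congr rfl fun n _ => ?_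
    field_simp
  have hPcont : Continuous fun ξ => fourierPartialSum H s ξ * exp (I * t * ξ) := by
    unfold fourierPartialSum; fun_prop
  rw [← hP, bandIntegral, bandIntegral, bandIntegral, ← intervalIntegral.integral_sub
    (hH.mul_continuousOn (by fun_prop)) (hPcont.intervalIntegrable _ _)]
  simp_rw [Pi.sub_apply, sub_mul]

lemma bandIntegral_sub_fourierPartialSum_intCast (hH : IntervalIntegrable H volume (-π) π)
    (s : Finset ℤ) (m : ℤ) :
    bandIntegral (H - fourierPartialSum H s) m = if m ∈ s then 0 else bandIntegral H m := by
  have hsinc (n : ℤ) : (nsinc ((m : ℝ) - n) : ℂ) = if m = n then 1 else 0 := by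
    rw [← Int.cast_sub, nsinc_intCast]
    split_ifs <;> simp_all [sub_eq_zero]
  simp only [bandIntegral_sub_fourierPartialSum hH, hsinc, mul_ite, mul_one, mul_zero,
    Finset.sum_ite_eq]
  split_ifs <;> simp

theorem tendsto_integral_sq_sub_fourierPartialSum
    (hH : MemLp H 2 (volume.restrict (Ioc (-π) π))) :
    Tendsto (fun s : Finset ℤ => ∫ ξ in -π..π, ‖H ξ - fourierPartialSum H s ξ‖ ^ 2)
      atTop (𝓝 0) := by
  set q : ℤ → ℝ := fun m => ‖bandIntegral H m‖ ^ 2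
  have hq : HasSum q (2 * π * ∫ ξ in -π..π, ‖H ξ‖ ^ 2) := hasSum_sq_norm_bandIntegral_intCast hH
  have htail (s : Finset ℤ) : 2 * π * ∫ ξ in -π..π, ‖H ξ - fourierPartialSum H s ξ‖ ^ 2
      = 2 * π * (∫ ξ in -π..π, ‖H ξ‖ ^ 2) - ∑ m ∈ s, q m := by
    have hE := hasSum_sq_norm_bandIntegral_intCast (hH.sub (memLp_fourierPartialSum H s 2 _))
    simp only [Pi.sub_apply, bandIntegral_sub_fourierPartialSum_intCast
      (hH.intervalIntegrable one_le_two (neg_le_self Real.pi_pos.le))] at hE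
    have hfin : HasSum (fun m => if m ∈ s then q m else 0) (∑ m ∈ s, if m ∈ s then q m else 0) :=
      hasSum_sum_of_ne_finset_zero fun m hm => if_neg hm
    rw [Finset.sum_ite_mem, Finset.inter_self] at hfin
    refine hE.unique ((hq.sub hfin).congr_fun fun m => ?_)
    split_ifs <;> simp [q]
  have hlim : Tendsto (fun s : Finset ℤ =>
      2 * π * ∫ ξ in -π..π, ‖H ξ - fourierPartialSum H s ξ‖ ^ 2) atTop (𝓝 0) := by
    simp_rw [htail]
    rw [← sub_self (2 * π * ∫ ξ in -π..π, ‖H ξ‖ ^ 2)]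
    exact hq.const_sub _
  simpa [← mul_assoc, Real.pi_ne_zero] using hlim.const_mul (2 * π)⁻¹

theorem tendsto_eLpNorm_sub_sampling_bandIntegral
    (hH : MemLp H 2 (volume.restrict (Ioc (-π) π))) :
    Tendsto (fun s : Finset ℤ =>
      eLpNorm (fun t => bandIntegral H t - ∑ n ∈ s, bandIntegral H n * nsinc (t - n)) 2 volume)
      atTop (𝓝 0) := by
  have hnorm (s : Finset ℤ) : eLpNorm (fun t => bandIntegral H t - ∑ n ∈ s,
      bandIntegral H n * nsinc (t - n)) 2 volume = ENNReal.ofReal (2 * π *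
        ∫ ξ in -π..π, ‖H ξ - fourierPartialSum H s ξ‖ ^ 2) ^ (1 / 2 : ℝ) := by
    simp_rw [← bandIntegral_sub_fourierPartialSum
      (hH.intervalIntegrable one_le_two (neg_le_self Real.pi_pos.le)) s]
    rw [eLpNorm_eq_lintegral_rpow_enorm_toReal two_ne_zero ENNReal.ofNat_ne_top]
    simp only [ENNReal.toReal_ofNat, ENNReal.rpow_two]
    rw [lintegral_enorm_bandIntegral_sq (hH.sub (memLp_fourierPartialSum H s 2 _))]
    simp only [Pi.sub_apply]
  have hlim : Tendsto (fun s : Finset ℤ => ENNReal.ofReal (2 * π *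
      ∫ ξ in -π..π, ‖H ξ - fourierPartialSum H s ξ‖ ^ 2)) atTop (𝓝 0) := by
    simpa using ENNReal.tendsto_ofReal
      ((tendsto_integral_sq_sub_fourierPartialSum hH).const_mul (2 * π))
  simp_rw [hnorm]
  simpa [Function.comp_def] using ((ENNReal.continuous_rpow_const (y := 1 / 2)).tendsto 0).comp hlim

theorem tendstoUniformly_sampling_bandIntegral
    (hH : MemLp H 2 (volume.restrict (Ioc (-π) π))) :
    TendstoUniformly (fun (s : Finset ℤ) t => ∑ n ∈ s, bandIntegral H n * nsinc (t - n))
      (bandIntegral H) atTop := by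
  rw [Metric.tendstoUniformly_iff]
  intro δ hδ
  have hsmall := ((tendsto_integral_sq_sub_fourierPartialSum hH).const_mul (2 * π)).eventually
    (gt_mem_nhds (by rw [mul_zero]; positivity : 2 * π * 0 < δ ^ 2))
  filter_upwards [hsmall] with s hs t
  have hbound := sq_norm_bandIntegral_le (hH.sub (memLp_fourierPartialSum H s 2 _)) t
  rw [bandIntegral_sub_fourierPartialSum
    (hH.intervalIntegrable one_le_two (neg_le_self Real.pi_pos.le))] at hbound
  simp only [Pi.sub_apply] at hbound
  rw [dist_eq_norm]
  exact lt_of_pow_lt_pow_left₀ 2 hδ.le (hbound.trans_lt hs)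

end BandIntegral

theorem wsk_sampling_general
    (f : ℝ → ℂ)
    (F : ℝ → ℂ) (hF2 : MemLp F 2 volume)
    (hFsupp : ∀ ξ : ℝ, ξ ∉ Set.Icc (-Real.pi) Real.pi → F ξ = 0)
    (hrep : ∀ t : ℝ, f t =
      (1 / Real.sqrt (2 * Real.pi) : ℝ) *
        ∫ ξ : ℝ, F ξ * Complex.exp (Complex.I * t * ξ)) :
    Tendsto (fun N : ℕ =>
        eLpNorm (fun t : ℝ =>
          f t - ∑ n ∈ Finset.Icc (-(N : ℤ)) (N : ℤ), f n * (nsinc (t - n) : ℝ))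
          2 volume)
      atTop (nhds 0) ∧
    TendstoUniformly
      (fun N : ℕ => fun t : ℝ =>
        ∑ n ∈ Finset.Icc (-(N : ℤ)) (N : ℤ), f n * (nsinc (t - n) : ℝ))
      f atTop := by
  set c : ℂ := ((1 / Real.sqrt (2 * π) : ℝ) : ℂ)
  have hH : MemLp (fun ξ => c * F ξ) 2 (volume.restrict (Ioc (-π) π)) :=
    (hF2.const_mul c).restrict _
  have hf : f = bandIntegral fun ξ => c * F ξ := by
    ext t
    rw [hrep t, bandIntegral, ← setIntegral_eq_integral_of_forall_compl_eq_zero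
      fun ξ hξ => by rw [hFsupp ξ hξ, zero_mul], integral_Icc_eq_integral_Ioc,
      ← intervalIntegral.integral_of_le (neg_le_self Real.pi_pos.le),
      ← intervalIntegral.integral_const_mul]
    simp_rw [mul_assoc]
  subst hf
  exact ⟨(tendsto_eLpNorm_sub_sampling_bandIntegral hH).comp Finset.tendsto_Icc_neg,
    fun u hu => Finset.tendsto_Icc_neg.eventually (tendstoUniformly_sampling_bandIntegral hH u hu)⟩

/-- Whittaker–Shannon–Kotelnikov sampling theorem on PW_π.
Membership in PW_π is expressed by: f is continuous, f ∈ L², and f is the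
inverse Fourier transform of an L² function supported in [−π,π]. -/
theorem wsk_sampling
    (f : ℝ → ℂ) (hcont : Continuous f) (hf2 : MemLp f 2 volume)
    (F : ℝ → ℂ) (hF2 : MemLp F 2 volume)
    (hFsupp : ∀ ξ : ℝ, ξ ∉ Set.Icc (-Real.pi) Real.pi → F ξ = 0)
    (hrep : ∀ t : ℝ, f t =
      (1 / Real.sqrt (2 * Real.pi) : ℝ) *
        ∫ ξ : ℝ, F ξ * Complex.exp (Complex.I * t * ξ)) :
    Tendsto (fun N : ℕ =>
        eLpNorm (fun t : ℝ =>
          f t - ∑ n ∈ Finset.Icc (-(N : ℤ)) (N : ℤ), f n * (nsinc (t - n) : ℝ))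
          2 volume)
      atTop (nhds 0) ∧
    TendstoUniformly
      (fun N : ℕ => fun t : ℝ =>
        ∑ n ∈ Finset.Icc (-(N : ℤ)) (N : ℤ), f n * (nsinc (t - n) : ℝ))
      f atTop :=
  wsk_sampling_general f F hF2 hFsupp hrep
end
end

section
/- Let g ∈ L²[0,Δ] and let ρ : ℤ → ℂ with |ρ(n)| = 1 for all n. Then the sequence {g(ξ)ρ(n)e^{−ibnξ} : n ∈ ℤ} is a Bessel sequence in L²[0,Δ] with bound B if and only if Δ|g(ξ)|² ≤ B a.e. on [0,Δ]. -/
noncomputable section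
open MeasureTheory Complex Filter Topology

/-!
Since `e^{ibnξ}`, `n ∈ ℤ`, is up to the factor `Δ^{-1/2}` an orthonormal basis of `L²(0, Δ]`,
Parseval turns the Bessel sum of `F` into `∫ Δ |g|² |F|²`. Hence the Bessel inequality says that
`Δ |g|²` is dominated by `B` when integrated against every `|F|²`; indicators of measurable sets
give the a.e. bound, and the a.e. bound gives the inequality pointwise.
-/

open Set ComplexConjugate

theorem hasSum_norm_sq_setIntegral_mul_exp {Δ : ℝ} (hΔ : 0 < Δ) {h : ℝ → ℂ}
    (hh : MemLp h 2 (volume.restrict (Ioc 0 Δ))) :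
    HasSum (fun n : ℤ => ‖∫ ξ in Ioc 0 Δ, h ξ * exp (2 * Real.pi * I * n * ξ / Δ)‖ ^ 2)
      (Δ * ∫ ξ in Ioc 0 Δ, ‖h ξ‖ ^ 2) := by
  have parseval := (hasSum_sq_fourierCoeffOn hΔ hh).mul_left (Δ ^ 2)
  have coeff (n : ℤ) : ‖∫ ξ in Ioc 0 Δ, h ξ * exp (2 * Real.pi * I * n * ξ / Δ)‖ ^ 2
      = Δ ^ 2 * ‖fourierCoeffOn hΔ h (-n)‖ ^ 2 := by
    simp only [fourierCoeffOn_eq_integral, fourier_coe_apply, neg_neg, sub_zero,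
      intervalIntegral.integral_of_le hΔ.le, norm_smul, norm_div, norm_one,
      Real.norm_of_nonneg hΔ.le, mul_pow, smul_eq_mul, mul_comm (h _)]
    field_simp
  have total : Δ ^ 2 * (Δ - 0)⁻¹ • ∫ ξ in 0..Δ, ‖h ξ‖ ^ 2 = Δ * ∫ ξ in Ioc 0 Δ, ‖h ξ‖ ^ 2 := by
    rw [sub_zero, intervalIntegral.integral_of_le hΔ.le, smul_eq_mul]
    field_simp
  rw [total] at parseval
  simpa only [coeff, Function.comp_def, Equiv.neg_apply] using
    (Equiv.neg ℤ).hasSum_iff.mpr parseval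

theorem exp_mul_eq_exp_two_pi_mul_div {c Δ : ℝ} (hc : c * Δ = 2 * Real.pi) (n : ℤ) (ξ : ℝ) :
    exp (I * c * n * ξ) = exp (2 * Real.pi * I * n * ξ / Δ) := by
  have hc' : (c : ℂ) * Δ = 2 * Real.pi := mod_cast hc
  have hΔ : (Δ : ℂ) ≠ 0 := by
    rintro hΔ
    simp [hΔ, Real.pi_ne_zero] at hc'
  congr 1
  rw [eq_div_iff hΔ]
  linear_combination (I * n * ξ) * hc'

theorem hasSum_norm_sq_setIntegral_mul_exp_of_abs_mul {b Δ : ℝ} (hbΔ : |b| * Δ = 2 * Real.pi)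
    {h : ℝ → ℂ} (hh : MemLp h 2 (volume.restrict (Ioc 0 Δ))) :
    HasSum (fun n : ℤ => ‖∫ ξ in Ioc 0 Δ, h ξ * exp (I * b * n * ξ)‖ ^ 2)
      (Δ * ∫ ξ in Ioc 0 Δ, ‖h ξ‖ ^ 2) := by
  have hΔ : 0 < Δ := pos_of_mul_pos_right (hbΔ ▸ Real.two_pi_pos) (abs_nonneg b)
  have parseval := hasSum_norm_sq_setIntegral_mul_exp hΔ hh
  rcases abs_choice b with hb | hb <;> rw [hb] at hbΔ
  · simpa only [exp_mul_eq_exp_two_pi_mul_div hbΔ] using parseval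
  · have reflect (n : ℤ) (ξ : ℝ) :
        exp (I * b * n * ξ) = exp (2 * Real.pi * I * (-n : ℤ) * ξ / Δ) := by
      rw [← exp_mul_eq_exp_two_pi_mul_div hbΔ]
      push_cast
      ring_nf
    simpa only [reflect, Function.comp_def, Equiv.neg_apply] using
      (Equiv.neg ℤ).hasSum_iff.mpr parseval

-- The sum lives in `ℝ≥0∞`, so it needs no summability hypothesis.
def IsBesselSeq {α ι : Type*} [MeasurableSpace α] (μ : Measure α) (φ : ι → α → ℂ) (B : ℝ) :
    Prop :=
  ∀ F : α → ℂ, MemLp F 2 μ →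
    ∑' n, ENNReal.ofReal (‖∫ x, F x * conj (φ n x) ∂μ‖ ^ 2) ≤
      ENNReal.ofReal (B * ∫ x, ‖F x‖ ^ 2 ∂μ)

def modulatedFamily (b : ℝ) (g : ℝ → ℂ) (ρ : ℤ → ℂ) (n : ℤ) (ξ : ℝ) : ℂ :=
  g ξ * ρ n * exp (-I * b * n * ξ)

section ModulatedFamily

variable {b Δ : ℝ} {g : ℝ → ℂ} {ρ : ℤ → ℂ}

theorem tsum_ofReal_norm_sq_setIntegral_modulatedFamily (hbΔ : |b| * Δ = 2 * Real.pi)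
    (hρ : ∀ n, ‖ρ n‖ = 1) {F : ℝ → ℂ}
    (hFg : MemLp (fun ξ => F ξ * conj (g ξ)) 2 (volume.restrict (Ioc 0 Δ))) :
    ∑' n, ENNReal.ofReal (‖∫ ξ in Ioc 0 Δ, F ξ * conj (modulatedFamily b g ρ n ξ)‖ ^ 2) =
      ENNReal.ofReal (∫ ξ in Ioc 0 Δ, Δ * ‖g ξ‖ ^ 2 * ‖F ξ‖ ^ 2) := by
  have unimodular (n : ℤ) : ‖∫ ξ in Ioc 0 Δ, F ξ * conj (modulatedFamily b g ρ n ξ)‖ =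
      ‖∫ ξ in Ioc 0 Δ, F ξ * conj (g ξ) * exp (I * b * n * ξ)‖ := by
    have pointwise (ξ : ℝ) : F ξ * conj (modulatedFamily b g ρ n ξ) =
        conj (ρ n) * (F ξ * conj (g ξ) * exp (I * b * n * ξ)) := by
      simp only [modulatedFamily, map_mul, ← exp_conj, map_neg, conj_I, conj_ofReal,
        map_intCast]
      ring_nf
    simp only [pointwise, integral_const_mul, norm_mul, RCLike.norm_conj, hρ, one_mul]
  have parseval := hasSum_norm_sq_setIntegral_mul_exp_of_abs_mul hbΔ hFg
  simp only [unimodular]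
  rw [← ENNReal.ofReal_tsum_of_nonneg (fun n => sq_nonneg _) parseval.summable,
    parseval.tsum_eq, ← integral_const_mul]
  congr 2 with ξ
  rw [norm_mul, RCLike.norm_conj]
  ring

theorem ae_mul_norm_sq_le_of_isBesselSeq_modulatedFamily (hbΔ : |b| * Δ = 2 * Real.pi)
    (hg : MemLp g 2 (volume.restrict (Ioc 0 Δ))) (hρ : ∀ n, ‖ρ n‖ = 1) {B : ℝ} (hB : 0 ≤ B)
    (hBessel : IsBesselSeq (volume.restrict (Ioc 0 Δ)) (modulatedFamily b g ρ) B) :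
    ∀ᵐ ξ ∂volume.restrict (Ioc 0 Δ), Δ * ‖g ξ‖ ^ 2 ≤ B := by
  set μ := volume.restrict (Ioc (0 : ℝ) Δ)
  have hg_sq : Integrable (fun ξ => Δ * ‖g ξ‖ ^ 2) μ :=
    ((memLp_two_iff_integrable_sq_norm hg.1).1 hg).const_mul Δ
  refine ae_le_of_forall_setIntegral_le hg_sq (integrable_const B) fun s hs _ => ?_
  let F := s.indicator fun _ => (1 : ℂ)
  have hF : MemLp F 2 μ := memLp_indicator_const 2 hs 1 (Or.inr (measure_ne_top μ s))
  have hFg : MemLp (fun ξ => F ξ * conj (g ξ)) 2 μ := by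
    convert (hg.star).indicator hs using 1
    ext ξ
    by_cases hξ : ξ ∈ s <;> simp [F, hξ]
  have hIndicator := hBessel F hF
  rw [tsum_ofReal_norm_sq_setIntegral_modulatedFamily hbΔ hρ hFg] at hIndicator
  have lhs : ∫ ξ, Δ * ‖g ξ‖ ^ 2 * ‖F ξ‖ ^ 2 ∂μ = ∫ ξ in s, Δ * ‖g ξ‖ ^ 2 ∂μ := by
    rw [← integral_indicator hs]
    congr with ξ
    by_cases hξ : ξ ∈ s <;> simp [F, hξ]
  have rhs : B * ∫ ξ, ‖F ξ‖ ^ 2 ∂μ = ∫ _ in s, B ∂μ := by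
    rw [← integral_const_mul, ← integral_indicator hs]
    congr with ξ
    by_cases hξ : ξ ∈ s <;> simp [F, hξ]
  rwa [lhs, rhs, ENNReal.ofReal_le_ofReal_iff (integral_nonneg fun _ => hB)] at hIndicator

theorem isBesselSeq_modulatedFamily_of_ae_mul_norm_sq_le (hbΔ : |b| * Δ = 2 * Real.pi)
    (hg : AEStronglyMeasurable g (volume.restrict (Ioc 0 Δ))) (hρ : ∀ n, ‖ρ n‖ = 1) {B : ℝ}
    (hbound : ∀ᵐ ξ ∂volume.restrict (Ioc 0 Δ), Δ * ‖g ξ‖ ^ 2 ≤ B) :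
    IsBesselSeq (volume.restrict (Ioc 0 Δ)) (modulatedFamily b g ρ) B := by
  have hΔ : 0 < Δ := pos_of_mul_pos_right (hbΔ ▸ Real.two_pi_pos) (abs_nonneg b)
  intro F hF
  have hgF : ∀ᵐ ξ ∂volume.restrict (Ioc 0 Δ), ‖F ξ * conj (g ξ)‖ ≤ √(B / Δ) * ‖F ξ‖ := by
    filter_upwards [hbound] with ξ hξ
    rw [norm_mul, RCLike.norm_conj, mul_comm, ← Real.sqrt_sq (norm_nonneg (g ξ))]
    gcongr
    rwa [le_div_iff₀' hΔ]
  have hFg := hF.of_le_mul (hF.1.mul hg.star) hgF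
  rw [tsum_ofReal_norm_sq_setIntegral_modulatedFamily hbΔ hρ hFg, ← integral_const_mul]
  have hFg2 : Integrable (fun ξ => Δ * ‖g ξ‖ ^ 2 * ‖F ξ‖ ^ 2) (volume.restrict (Ioc 0 Δ)) :=
    (((memLp_two_iff_integrable_sq_norm hFg.1).1 hFg).const_mul Δ).congr
      (ae_of_all _ fun ξ => by simp only [Pi.mul_apply, Pi.star_apply, norm_mul, norm_star]; ring)
  have hF2 := ((memLp_two_iff_integrable_sq_norm hF.1).1 hF).const_mul B
  refine ENNReal.ofReal_le_ofReal (integral_mono_ae hFg2 hF2 ?_)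
  filter_upwards [hbound] with ξ hξ
  gcongr

/-- Bessel characterization for the modulated family
{g(ξ)ρ(n)e^{−ibnξ}} in L²[0,Δ], Δ = 2π/|b|. -/
theorem bessel_iff_ae_bound
    (b : ℝ) (hb : b ≠ 0) (Δ : ℝ) (hΔ : Δ = 2 * Real.pi / |b|)
    (g : ℝ → ℂ) (hg : MemLp g 2 (volume.restrict (Set.Ioc (0 : ℝ) Δ)))
    (ρ : ℤ → ℂ) (hρ : ∀ n : ℤ, ‖ρ n‖ = 1) (B : ℝ) (hB : 0 < B) :
    ((∀ F : ℝ → ℂ, MemLp F 2 (volume.restrict (Set.Ioc (0 : ℝ) Δ)) →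
        ∑' n : ℤ, ENNReal.ofReal
            (‖∫ ξ in Set.Ioc (0 : ℝ) Δ,
                F ξ * (starRingEnd ℂ) (g ξ * ρ n * Complex.exp (-Complex.I * b * n * ξ))‖ ^ 2)
          ≤ ENNReal.ofReal (B * ∫ ξ in Set.Ioc (0 : ℝ) Δ, ‖F ξ‖ ^ 2))
      ↔ (∀ᵐ ξ ∂(volume.restrict (Set.Ioc (0 : ℝ) Δ)), Δ * ‖g ξ‖ ^ 2 ≤ B)) := by
  have hbΔ : |b| * Δ = 2 * Real.pi := by
    rw [hΔ]
    field_simp [abs_pos.mpr hb]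
  exact ⟨ae_mul_norm_sq_le_of_isBesselSeq_modulatedFamily hbΔ hg hρ hB.le,
    isBesselSeq_modulatedFamily_of_ae_mul_norm_sq_le hbΔ hg.1 hρ⟩
end ModulatedFamily
end
end

section
/- Suppose φ ∈ L²(ℝ) is well-defined everywhere, C_{φ,θ}(t) := Σ_n |(λ_θφ)(t−n)|² < ∞ for all t ∈ ℝ, and {η_θ(t)(λ_θφ)(t−n) : n ∈ ℤ} is a Riesz basis of V_θ(φ). Then V_θ(φ) is a reproducing kernel Hilbert space: the point evaluation f ↦ f(t) is a bounded linear functional on V_θ(φ) for every t ∈ ℝ, and every f = c ∗_θ φ ∈ V_θ(φ) is the pointwise limit of η_θ(t)Σ_{|n|≤N} λ_θ(n)c(n)(λ_θφ)(t−n), which also converges in L²(ℝ). -/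
noncomputable section
open MeasureTheory Complex Filter Topology

open scoped ENNReal

/-! Since the chirps are unimodular, Cauchy–Schwarz in `ℓ²(ℤ)` bounds `|(c ∗_θ φ)(t)|²` by
`‖c(θ)‖² C_{φ,θ}(t) ‖c‖²_{ℓ²}`; this gives bounded point evaluations and absolute convergence of
the series at every point. For the `L²` convergence, the upper Riesz bound controls every finite
block of the series by `√(B ∑ |c n|²)` over the block, and Fatou's lemma for the `L²` norm carries
this bound to the tail `c ∗_θ φ − S_N`, so its norm is at most `√(B ∑_{|n| > N} |c n|²) → 0`. -/

theorem summable_mul_and_norm_tsum_mul_sq_le {ι R : Type*} [NormedRing R] [CompleteSpace R]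
    {a b : ι → R} (ha : Summable fun i => ‖a i‖ ^ 2) (hb : Summable fun i => ‖b i‖ ^ 2) :
    Summable (fun i => a i * b i) ∧
      ‖∑' i, a i * b i‖ ^ 2 ≤ (∑' i, ‖a i‖ ^ 2) * ∑' i, ‖b i‖ ^ 2 := by
  obtain ⟨hsum, hle⟩ := Real.summable_and_inner_le_Lp_mul_Lq_tsum_of_nonneg
    Real.HolderConjugate.two_two (f := fun i => ‖a i‖) (g := fun i => ‖b i‖)
    (fun _ => norm_nonneg _) (fun _ => norm_nonneg _)
    (by simpa only [Real.rpow_two] using ha) (by simpa only [Real.rpow_two] using hb)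
  simp only [Real.rpow_two, ← Real.sqrt_eq_rpow] at hle
  refine ⟨hsum.of_norm_bounded fun i => norm_mul_le _ _, ?_⟩
  have hnorm : ‖∑' i, a i * b i‖ ≤ √(∑' i, ‖a i‖ ^ 2) * √(∑' i, ‖b i‖ ^ 2) :=
    (tsum_of_norm_bounded hsum.hasSum fun i => norm_mul_le _ _).trans hle
  calc ‖∑' i, a i * b i‖ ^ 2 ≤ (√(∑' i, ‖a i‖ ^ 2) * √(∑' i, ‖b i‖ ^ 2)) ^ 2 := by gcongr
    _ = (∑' i, ‖a i‖ ^ 2) * ∑' i, ‖b i‖ ^ 2 := by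
      rw [mul_pow, Real.sq_sqrt (tsum_nonneg fun _ => by positivity),
        Real.sq_sqrt (tsum_nonneg fun _ => by positivity)]

theorem MeasureTheory.MemLp.eLpNorm_two_le_of_integral_norm_sq_le {α E : Type*}
    [MeasurableSpace α] {μ : Measure α} [NormedAddCommGroup E] {g : α → E} (hg : MemLp g 2 μ)
    {C : ℝ} (hC : ∫ x, ‖g x‖ ^ 2 ∂μ ≤ C) : eLpNorm g 2 μ ≤ ENNReal.ofReal √C := by
  rw [hg.eLpNorm_eq_integral_rpow_norm two_ne_zero ENNReal.ofNat_ne_top]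
  simp only [ENNReal.toReal_ofNat, Real.rpow_two, ← one_div, ← Real.sqrt_eq_rpow]
  gcongr

theorem eLpNorm_sub_sum_le_sqrt_tail {α E : Type*} [MeasurableSpace α] {μ : Measure α}
    [NormedAddCommGroup E] {p : ℝ≥0∞} {f : ℤ → α → E} {F : α → E}
    (hf : ∀ n, AEStronglyMeasurable (f n) μ) (hF : ∀ᵐ x ∂μ, HasSum (fun n => f n x) (F x))
    {w : ℤ → ℝ} (hw0 : ∀ n, 0 ≤ w n) (hw : Summable w)
    (hblock_le : ∀ s : Finset ℤ,
      eLpNorm (fun x => ∑ n ∈ s, f n x) p μ ≤ ENNReal.ofReal √(∑ n ∈ s, w n))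
    (t : Finset ℤ) :
    eLpNorm (fun x => F x - ∑ n ∈ t, f n x) p μ ≤ ENNReal.ofReal √(∑' n, w n - ∑ n ∈ t, w n) := by
  have hsub : ∀ᶠ M : ℕ in atTop, t ⊆ Finset.Icc (-(M : ℤ)) M :=
    tendsto_atTop.1 Finset.tendsto_Icc_neg t
  have hlim : ∀ᵐ x ∂μ, Tendsto (fun M : ℕ => ∑ n ∈ Finset.Icc (-(M : ℤ)) M \ t, f n x) atTop
      (𝓝 (F x - ∑ n ∈ t, f n x)) := by
    filter_upwards [hF] with x hx
    refine ((hx.comp Finset.tendsto_Icc_neg).sub_const _).congr' ?_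
    filter_upwards [hsub] with M hM
    exact (Finset.sum_sdiff_eq_sub hM).symm
  have hblock : ∀ M : ℕ, eLpNorm (fun x => ∑ n ∈ Finset.Icc (-(M : ℤ)) M \ t, f n x) p μ ≤
      ENNReal.ofReal √(∑' n, w n - ∑ n ∈ t, w n) := by
    intro M
    refine (hblock_le _).trans ?_
    have := hw.sum_le_tsum ((Finset.Icc (-(M : ℤ)) M \ t) ∪ t) (fun n _ => hw0 n)
    rw [Finset.sum_union Finset.sdiff_disjoint] at this
    gcongr
    linarith
  refine (Lp.eLpNorm_lim_le_liminf_eLpNorm (fun M => ?_) _ hlim).trans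
    (liminf_le_of_frequently_le' (Frequently.of_forall hblock))
  exact Finset.aestronglyMeasurable_fun_sum _ fun n _ => hf n

theorem tendsto_eLpNorm_sub_sum_Icc {α E : Type*} [MeasurableSpace α] {μ : Measure α}
    [NormedAddCommGroup E] {p : ℝ≥0∞} {f : ℤ → α → E} {F : α → E}
    (hf : ∀ n, AEStronglyMeasurable (f n) μ) (hF : ∀ᵐ x ∂μ, HasSum (fun n => f n x) (F x))
    {w : ℤ → ℝ} (hw0 : ∀ n, 0 ≤ w n) (hw : Summable w)
    (hblock_le : ∀ s : Finset ℤ,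
      eLpNorm (fun x => ∑ n ∈ s, f n x) p μ ≤ ENNReal.ofReal √(∑ n ∈ s, w n)) :
    Tendsto (fun N : ℕ => eLpNorm (fun x => F x - ∑ n ∈ Finset.Icc (-(N : ℤ)) N, f n x) p μ)
      atTop (𝓝 0) := by
  have htail : Tendsto (fun N : ℕ => ∑' n, w n - ∑ n ∈ Finset.Icc (-(N : ℤ)) N, w n) atTop
      (𝓝 0) := by
    simpa using (tendsto_const_nhds (x := ∑' n, w n)).sub (hw.hasSum.comp Finset.tendsto_Icc_neg)
  have htail_bound : Tendsto (fun N : ℕ => ENNReal.ofReal √(∑' n, w n -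
      ∑ n ∈ Finset.Icc (-(N : ℤ)) N, w n)) atTop (𝓝 0) := by
    simpa [Function.comp_def] using
      ((ENNReal.continuous_ofReal.comp Real.continuous_sqrt).tendsto 0).comp htail
  exact tendsto_of_tendsto_of_tendsto_of_le_of_le tendsto_const_nhds htail_bound (fun _ => zero_le)
    fun N => eLpNorm_sub_sum_le_sqrt_tail hf hF hw0 hw hblock_le _

@[simp]
theorem norm_lamP (θ x : ℝ) : ‖lamP θ x‖ = 1 := by
  have h : Complex.I * (aP θ : ℂ) * (x : ℂ) ^ 2 = ((aP θ * x ^ 2 : ℝ) : ℂ) * Complex.I := by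
    push_cast; ring
  rw [lamP, h, Complex.norm_exp_ofReal_mul_I]

@[fun_prop]
theorem continuous_lamP (θ : ℝ) : Continuous (lamP θ) := by
  unfold lamP; fun_prop

section ChirpedShifts

variable {θ : ℝ} {φ : ℝ → ℂ}

theorem MeasureTheory.MemLp.lamP_mul {p : ℝ≥0∞} {μ : Measure ℝ} (hφ : MemLp φ p μ) :
    MemLp (fun x => lamP θ x * φ x) p μ :=
  hφ.of_le ((continuous_lamP θ).aestronglyMeasurable.mul hφ.1) (ae_of_all _ fun x => by simp)

theorem memLp_chirpedShift_term (hφ : MemLp φ 2 volume) (z : ℂ) (n : ℤ) :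
    MemLp (fun t : ℝ => cP θ * starRingEnd ℂ (lamP θ t) * (z * (lamP θ (t - n) * φ (t - n))))
      2 volume := by
  have hshift : MemLp (fun t : ℝ => lamP θ (t - n) * φ (t - n)) 2 volume :=
    hφ.lamP_mul.comp_measurePreserving (measurePreserving_sub_right volume (n : ℝ))
  have hshift_meas := hshift.aestronglyMeasurable
  refine hshift.of_le_mul (c := ‖cP θ‖ * ‖z‖) (by fun_prop) (ae_of_all _ fun t => le_of_eq ?_)
  simp only [norm_mul, RCLike.norm_conj, norm_lamP]
  ring

theorem summable_and_norm_sq_fracConv_le {t : ℝ}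
    (hC : Summable fun n : ℤ => ‖lamP θ (t - n) * φ (t - n)‖ ^ 2) {c : ℤ → ℂ}
    (hc : Summable fun n : ℤ => ‖c n‖ ^ 2) :
    Summable (fun n : ℤ => lamP θ n * c n * (lamP θ (t - n) * φ (t - n))) ∧
      ‖cP θ * starRingEnd ℂ (lamP θ t) *
          ∑' n : ℤ, lamP θ n * c n * (lamP θ (t - n) * φ (t - n))‖ ^ 2 ≤
        (‖cP θ‖ ^ 2 * ∑' n : ℤ, ‖lamP θ (t - n) * φ (t - n)‖ ^ 2) * ∑' n : ℤ, ‖c n‖ ^ 2 := by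
  have hcoeff : ∀ n : ℤ, ‖lamP θ n * c n‖ = ‖c n‖ := fun n => by simp
  obtain ⟨hsum, hle⟩ := summable_mul_and_norm_tsum_mul_sq_le
    (a := fun n : ℤ => lamP θ n * c n) (by simpa only [hcoeff] using hc) hC
  simp only [hcoeff] at hle
  refine ⟨hsum, ?_⟩
  rw [norm_mul, norm_mul, RCLike.norm_conj, norm_lamP, mul_one, mul_pow]
  calc _ ≤ ‖cP θ‖ ^ 2 * ((∑' n : ℤ, ‖c n‖ ^ 2) * ∑' n : ℤ, ‖lamP θ (t - n) * φ (t - n)‖ ^ 2) := by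
        gcongr
    _ = _ := by ring

theorem eLpNorm_sum_fracConv_le (hφ : MemLp φ 2 volume) {B : ℝ}
    (hBessel : ∀ (s : Finset ℤ) (c : ℤ → ℂ),
      ∫ t : ℝ, ‖∑ n ∈ s, c n *
          (cP θ * starRingEnd ℂ (lamP θ t) * (lamP θ (t - n) * φ (t - n)))‖ ^ 2 ≤
        B * ∑ n ∈ s, ‖c n‖ ^ 2)
    (c : ℤ → ℂ) (s : Finset ℤ) :
    eLpNorm (fun t : ℝ => ∑ n ∈ s,
        cP θ * starRingEnd ℂ (lamP θ t) * (lamP θ n * c n * (lamP θ (t - n) * φ (t - n))))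
        2 volume ≤ ENNReal.ofReal √(∑ n ∈ s, B * ‖c n‖ ^ 2) := by
  have hmem := memLp_finsetSum s fun n _ => memLp_chirpedShift_term (θ := θ) hφ (lamP θ n * c n) n
  refine hmem.eLpNorm_two_le_of_integral_norm_sq_le ?_
  have hterm : ∀ (t : ℝ) (n : ℤ),
      cP θ * starRingEnd ℂ (lamP θ t) * (lamP θ n * c n * (lamP θ (t - n) * φ (t - n))) =
        lamP θ n * c n * (cP θ * starRingEnd ℂ (lamP θ t) * (lamP θ (t - n) * φ (t - n))) :=
    fun _ _ => by ring
  have hcoeff : ∀ n : ℤ, ‖lamP θ n * c n‖ = ‖c n‖ := fun n => by simp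
  have h := hBessel s fun n => lamP θ n * c n
  simp only [hcoeff] at h
  simp only [hterm, ← Finset.mul_sum]
  exact h

end ChirpedShifts

theorem Vtheta_rkhs_general
    (θ : ℝ) (φ : ℝ → ℂ) (hφ : MemLp φ 2 volume)
    (hC : ∀ t : ℝ, Summable (fun n : ℤ => ‖lamP θ (t - n) * φ (t - n)‖ ^ 2))
    (A B : ℝ)
    (hRiesz : ∀ (s : Finset ℤ) (c : ℤ → ℂ),
      A * ∑ n ∈ s, ‖c n‖ ^ 2 ≤
        (∫ t : ℝ, ‖∑ n ∈ s, c n *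
            (cP θ * (starRingEnd ℂ) (lamP θ t) * (lamP θ (t - n) * φ (t - n)))‖ ^ 2) ∧
      (∫ t : ℝ, ‖∑ n ∈ s, c n *
            (cP θ * (starRingEnd ℂ) (lamP θ t) * (lamP θ (t - n) * φ (t - n)))‖ ^ 2) ≤
        B * ∑ n ∈ s, ‖c n‖ ^ 2) :
    (∀ t : ℝ, ∃ Ct : ℝ, 0 ≤ Ct ∧
      ∀ c : ℤ → ℂ, Summable (fun n : ℤ => ‖c n‖ ^ 2) →
        ‖cP θ * (starRingEnd ℂ) (lamP θ t) *
            ∑' n : ℤ, lamP θ n * c n * (lamP θ (t - n) * φ (t - n))‖ ^ 2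
          ≤ Ct * ∑' n : ℤ, ‖c n‖ ^ 2) ∧
    (∀ c : ℤ → ℂ, Summable (fun n : ℤ => ‖c n‖ ^ 2) →
      (∀ t : ℝ, Tendsto (fun N : ℕ =>
          cP θ * (starRingEnd ℂ) (lamP θ t) *
            ∑ n ∈ Finset.Icc (-(N : ℤ)) (N : ℤ),
              lamP θ n * c n * (lamP θ (t - n) * φ (t - n)))
        atTop (nhds (cP θ * (starRingEnd ℂ) (lamP θ t) *
            ∑' n : ℤ, lamP θ n * c n * (lamP θ (t - n) * φ (t - n))))) ∧
      Tendsto (fun N : ℕ =>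
          eLpNorm (fun t : ℝ =>
            cP θ * (starRingEnd ℂ) (lamP θ t) *
                (∑' n : ℤ, lamP θ n * c n * (lamP θ (t - n) * φ (t - n))) -
              cP θ * (starRingEnd ℂ) (lamP θ t) *
                ∑ n ∈ Finset.Icc (-(N : ℤ)) (N : ℤ),
                  lamP θ n * c n * (lamP θ (t - n) * φ (t - n))) 2 volume)
        atTop (nhds 0)) := by
  have hB : 0 ≤ B := by
    simpa using (integral_nonneg fun _ => sq_nonneg _).trans (hRiesz {0} 1).2
  refine ⟨fun t => ⟨_, by positivity, fun c hc => (summable_and_norm_sq_fracConv_le (hC t) hc).2⟩,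
    fun c hc => ⟨fun t => ?_, ?_⟩⟩
  · exact ((summable_and_norm_sq_fracConv_le (hC t) hc).1.hasSum.comp
      Finset.tendsto_Icc_neg).const_mul _
  · simp only [Finset.mul_sum]
    exact tendsto_eLpNorm_sub_sum_Icc (fun n => (memLp_chirpedShift_term hφ _ n).1)
      (ae_of_all _ fun t => (summable_and_norm_sq_fracConv_le (hC t) hc).1.hasSum.mul_left _)
      (fun n => by positivity) (hc.mul_left B)
      (eLpNorm_sum_fracConv_le hφ (fun s c => (hRiesz s c).2) c)

/-- under finiteness of C_{φ,θ} and the Riesz-basis property of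
the chirped shifts, V_θ(φ) is an RKHS: point evaluations of f = c ∗_θ φ are
bounded by the ℓ²-norm of c, and c ∗_θ φ is both the pointwise and the L² limit
of its partial sums. -/
theorem Vtheta_rkhs
    (θ : ℝ) (hθ : Real.sin θ ≠ 0) (φ : ℝ → ℂ) (hφ : MemLp φ 2 volume)
    (hC : ∀ t : ℝ, Summable (fun n : ℤ => ‖lamP θ (t - n) * φ (t - n)‖ ^ 2))
    (A B : ℝ) (hA : 0 < A) (hAB : A ≤ B)
    (hRiesz : ∀ (s : Finset ℤ) (c : ℤ → ℂ),
      A * ∑ n ∈ s, ‖c n‖ ^ 2 ≤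
        (∫ t : ℝ, ‖∑ n ∈ s, c n *
            (cP θ * (starRingEnd ℂ) (lamP θ t) * (lamP θ (t - n) * φ (t - n)))‖ ^ 2) ∧
      (∫ t : ℝ, ‖∑ n ∈ s, c n *
            (cP θ * (starRingEnd ℂ) (lamP θ t) * (lamP θ (t - n) * φ (t - n)))‖ ^ 2) ≤
        B * ∑ n ∈ s, ‖c n‖ ^ 2) :
    (∀ t : ℝ, ∃ Ct : ℝ, 0 ≤ Ct ∧
      ∀ c : ℤ → ℂ, Summable (fun n : ℤ => ‖c n‖ ^ 2) →
        ‖cP θ * (starRingEnd ℂ) (lamP θ t) *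
            ∑' n : ℤ, lamP θ n * c n * (lamP θ (t - n) * φ (t - n))‖ ^ 2
          ≤ Ct * ∑' n : ℤ, ‖c n‖ ^ 2) ∧
    (∀ c : ℤ → ℂ, Summable (fun n : ℤ => ‖c n‖ ^ 2) →
      (∀ t : ℝ, Tendsto (fun N : ℕ =>
          cP θ * (starRingEnd ℂ) (lamP θ t) *
            ∑ n ∈ Finset.Icc (-(N : ℤ)) (N : ℤ),
              lamP θ n * c n * (lamP θ (t - n) * φ (t - n)))
        atTop (nhds (cP θ * (starRingEnd ℂ) (lamP θ t) *
            ∑' n : ℤ, lamP θ n * c n * (lamP θ (t - n) * φ (t - n))))) ∧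
      Tendsto (fun N : ℕ =>
          eLpNorm (fun t : ℝ =>
            cP θ * (starRingEnd ℂ) (lamP θ t) *
                (∑' n : ℤ, lamP θ n * c n * (lamP θ (t - n) * φ (t - n))) -
              cP θ * (starRingEnd ℂ) (lamP θ t) *
                ∑ n ∈ Finset.Icc (-(N : ℤ)) (N : ℤ),
                  lamP θ n * c n * (lamP θ (t - n) * φ (t - n))) 2 volume)
        atTop (nhds 0)) :=
  Vtheta_rkhs_general θ φ hφ hC A B hRiesz
end
end
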